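/- Let (K, ≤) be an ordered field and L an extension field of K. The ordering of K extends to an ordering of L if and only if -1 is not expressible as a sum of elements of the form a·x² with a ∈ K, a ≥ 0, and x ∈ L. -/

import Mathlib

/-!
An ordering of `L` containing the nonnegative elements of `K` contains every `a x²`, hence all
their sums, and so cannot contain `-1`. Conversely, if `-1` is not such a sum, these sums form a
preordering of `L`. By Zorn it lies in a maximal preordering `P`, and `P` is total: if `-b ∉ P`,
then `P + b P` is again a preordering (a relation `-1 = p + b q` with `q ≠ 0` would put
`-b = (1 + p) q / q²` in `P`), so by maximality `b ∈ P`.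
-/

/-- An ordering (positive cone) of a field `L`. -/
def IsOrdering {L : Type*} [Field L] (P : Set L) : Prop :=
  (∀ a ∈ P, ∀ b ∈ P, a + b ∈ P) ∧ (∀ a ∈ P, ∀ b ∈ P, a * b ∈ P) ∧
    (∀ a : L, a ∈ P ∨ -a ∈ P) ∧ (∀ a : L, a ∈ P → -a ∈ P → a = 0)

namespace RingPreordering

section CommRing

variable {R : Type*} [CommRing R]

theorem exists_le_isMax (P : RingPreordering R) : ∃ Q, P ≤ Q ∧ IsMax Q := by
  refine zorn_le_nonempty_Ici₀ P (fun c _ hc Q₀ hQ₀ => ?_) P le_rfl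
  have directed {x y : R} (hx : x ∈ ⋃ Q ∈ c, (Q : Set R)) (hy : y ∈ ⋃ Q ∈ c, (Q : Set R)) :
      ∃ Q ∈ c, x ∈ Q ∧ y ∈ Q := by
    simp only [Set.mem_iUnion, SetLike.mem_coe] at hx hy
    obtain ⟨Q₁, hQ₁, hx⟩ := hx
    obtain ⟨Q₂, hQ₂, hy⟩ := hy
    rcases hc.total hQ₁ hQ₂ with h | h
    · exact ⟨Q₂, hQ₂, h hx, hy⟩
    · exact ⟨Q₁, hQ₁, hx, h hy⟩
  refine ⟨mk' (⋃ Q ∈ c, (Q : Set R)) (fun hx hy => ?_) (fun hx hy => ?_)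
    (fun x => Set.mem_biUnion hQ₀ (Q₀.mul_self_mem x)) ?_, fun Q hQ x hx => Set.mem_biUnion hQ hx⟩
  · obtain ⟨Q, hQ, hx, hy⟩ := directed hx hy
    exact Set.mem_biUnion hQ (add_mem hx hy)
  · obtain ⟨Q, hQ, hx, hy⟩ := directed hx hy
    exact Set.mem_biUnion hQ (mul_mem hx hy)
  · simp only [Set.mem_iUnion, SetLike.mem_coe, not_exists]
    exact fun Q _ => Q.neg_one_notMem

end CommRing

section Field

variable {F : Type*} [Field F]

def adjoin (P : RingPreordering F) {b : F} (hb : -b ∉ P) : RingPreordering F :=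
  mk' {y | ∃ p ∈ P, ∃ q ∈ P, y = p + b * q}
    (by
      rintro _ _ ⟨p, hp, q, hq, rfl⟩ ⟨p', hp', q', hq', rfl⟩
      exact ⟨p + p', add_mem hp hp', q + q', add_mem hq hq', by ring⟩)
    (by
      rintro _ _ ⟨p, hp, q, hq, rfl⟩ ⟨p', hp', q', hq', rfl⟩
      refine ⟨p * p' + b ^ 2 * (q * q'), add_mem (mul_mem hp hp')
        (mul_mem (P.pow_two_mem b) (mul_mem hq hq')), p * q' + p' * q,
        add_mem (mul_mem hp hq') (mul_mem hp' hq), by ring⟩)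
    (fun x => ⟨x * x, P.mul_self_mem x, 0, zero_mem P, by ring⟩)
    (by
      rintro ⟨p, hp, q, hq, hpq⟩
      rcases eq_or_ne q 0 with rfl | hq0
      · exact P.neg_one_notMem (by simpa [hpq] using hp)
      · refine hb ?_
        have : -b = (1 + p) * q * q⁻¹ ^ 2 := by
          field_simp
          linear_combination hpq
        rw [this]
        exact mul_mem (mul_mem (add_mem (one_mem P) hp) hq) (P.pow_two_mem _))

theorem le_adjoin (P : RingPreordering F) {b : F} (hb : -b ∉ P) : P ≤ P.adjoin hb :=
  fun p hp => ⟨p, hp, 0, zero_mem P, by ring⟩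

theorem mem_adjoin (P : RingPreordering F) {b : F} (hb : -b ∉ P) : b ∈ P.adjoin hb :=
  ⟨0, zero_mem P, 1, one_mem P, by ring⟩

theorem hasMemOrNegMem_of_isMax {P : RingPreordering F} (hP : IsMax P) : HasMemOrNegMem P :=
  ⟨fun b => or_iff_not_imp_right.2 fun hb : -b ∉ P => hP (P.le_adjoin hb) (P.mem_adjoin hb)⟩

theorem isOrdering_coe (P : RingPreordering F) [HasMemOrNegMem P] :
    _root_.IsOrdering (P : Set F) :=
  ⟨fun _ ha _ hb => add_mem ha hb, fun _ ha _ hb => mul_mem ha hb, mem_or_neg_mem P,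
    fun _ ha hna => RingPreordering.eq_zero_of_mem_of_neg_mem ha hna⟩

end Field

end RingPreordering

section IsOrdering

variable {L : Type*} [Field L] {P : Set L}

theorem IsOrdering.mul_self_mem (hP : IsOrdering P) (x : L) : x * x ∈ P :=
  (hP.2.2.1 x).elim (fun h => hP.2.1 _ h _ h) fun h => by simpa using hP.2.1 _ h _ h

def IsOrdering.toRingPreordering (hP : IsOrdering P) : RingPreordering L :=
  .mk' P (hP.1 _ · _ ·) (hP.2.1 _ · _ ·) hP.mul_self_mem
    fun h => one_ne_zero (hP.2.2.2 1 (by simpa using hP.mul_self_mem 1) h)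

end IsOrdering

section NonnegWeightedSquares

variable (K L : Type*) [CommSemiring K] [PartialOrder K] [IsOrderedRing K] [CommRing L]
  [Algebra K L]

def nonnegWeightedSquares : Submonoid L where
  carrier := {t | ∃ a : K, 0 ≤ a ∧ ∃ x : L, t = algebraMap K L a * x ^ 2}
  one_mem' := ⟨1, zero_le_one, 1, by simp⟩
  mul_mem' := by
    rintro _ _ ⟨a, ha, x, rfl⟩ ⟨b, hb, y, rfl⟩
    exact ⟨a * b, mul_nonneg ha hb, x * y, by rw [map_mul]; ring⟩

variable {K L}

theorem mem_subsemiringClosure_nonnegWeightedSquares_iff {y : L} :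
    y ∈ (nonnegWeightedSquares K L).subsemiringClosure ↔
      ∃ (n : ℕ) (a : Fin n → K) (x : Fin n → L),
        (∀ i, 0 ≤ a i) ∧ y = ∑ i, algebraMap K L (a i) * x i ^ 2 := by
  rw [Submonoid.subsemiringClosure_mem]
  constructor
  · intro hy
    induction hy using AddSubmonoid.closure_induction with
    | mem t ht =>
      obtain ⟨a, ha, x, rfl⟩ := ht
      exact ⟨1, fun _ => a, fun _ => x, fun _ => ha, by simp⟩
    | zero => exact ⟨0, Fin.elim0, Fin.elim0, fun i => i.elim0, by simp⟩
    | add u v _ _ ihu ihv =>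
      obtain ⟨n, a, x, ha, rfl⟩ := ihu
      obtain ⟨m, b, y, hb, rfl⟩ := ihv
      refine ⟨n + m, Fin.append a b, Fin.append x y,
        Fin.addCases (fun i => by simpa using ha i) (fun i => by simpa using hb i), ?_⟩
      rw [Fin.sum_univ_add]
      simp
  · rintro ⟨n, a, x, ha, rfl⟩
    exact AddSubmonoid.sum_mem _ fun i _ => AddSubmonoid.subset_closure ⟨a i, ha i, x i, rfl⟩

theorem algebraMap_mem_subsemiringClosure_nonnegWeightedSquares {a : K} (ha : 0 ≤ a) :
    algebraMap K L a ∈ (nonnegWeightedSquares K L).subsemiringClosure :=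
  AddSubmonoid.subset_closure ⟨a, ha, 1, by simp⟩

theorem subsemiringClosure_nonnegWeightedSquares_le {Q : RingPreordering L}
    (hQ : ∀ a : K, 0 ≤ a → algebraMap K L a ∈ Q) :
    (nonnegWeightedSquares K L).subsemiringClosure ≤ Q.toSubsemiring :=
  AddSubmonoid.closure_le (S := Q.toAddSubmonoid).2 <| by
    rintro _ ⟨a, ha, x, rfl⟩
    exact Q.mul_mem (hQ a ha) (Q.pow_two_mem x)

def nonnegWeightedSumsOfSquares
    (h : (-1 : L) ∉ (nonnegWeightedSquares K L).subsemiringClosure) : RingPreordering L where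
  toSubsemiring := (nonnegWeightedSquares K L).subsemiringClosure
  mem_of_isSquare' := by
    rintro _ ⟨x, rfl⟩
    exact AddSubmonoid.subset_closure ⟨1, zero_le_one, x, by simp [sq]⟩
  neg_one_notMem' := h

end NonnegWeightedSquares

/-- The ordering of an ordered field `K` extends to an extension field `L` iff `-1`
is not a sum of elements `a·x²` with `a ∈ K`, `a ≥ 0`, `x ∈ L`. -/
theorem stmt2 {K L : Type*} [Field K] [LinearOrder K] [IsStrictOrderedRing K] [Field L] [Algebra K L] :
    (∃ P : Set L, IsOrdering P ∧ ∀ a : K, 0 ≤ a → algebraMap K L a ∈ P) ↔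
      ¬ ∃ (n : ℕ) (a : Fin n → K) (x : Fin n → L),
        (∀ i, 0 ≤ a i) ∧ (-1 : L) = ∑ i, algebraMap K L (a i) * x i ^ 2 := by
  rw [← mem_subsemiringClosure_nonnegWeightedSquares_iff]
  constructor
  · rintro ⟨P, hP, hK⟩ h
    exact hP.toRingPreordering.neg_one_notMem (subsemiringClosure_nonnegWeightedSquares_le hK h)
  · intro h
    obtain ⟨Q, hle, hQ⟩ := (nonnegWeightedSumsOfSquares h).exists_le_isMax
    have := RingPreordering.hasMemOrNegMem_of_isMax hQ
    exact ⟨Q, Q.isOrdering_coe, fun a ha =>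
      hle (algebraMap_mem_subsemiringClosure_nonnegWeightedSquares ha)⟩
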